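/- Fix positive integers t and r and irrational α > 0. Let ε be the minimum of (eα − v)/v over all integers v, e with 1 ≤ v ≤ t and eα − v > 0, and let K be such that r − Kε < 0. Then in G^s(n, n^{−α}), asymptotically almost surely |cl_t(X)| ≤ K + r for all X ⊆ V with |X| = r. -/

import Mathlib

open scoped Classical

/-- A finite `s`-uniform hypergraph on a vertex set of natural numbers. -/
structure UHypergraph (s : ℕ) where
  V : Finset ℕ
  E : Finset (Finset ℕ)
  card_edges : ∀ e ∈ E, e.card = s
  edges_sub : ∀ e ∈ E, e ⊆ V

namespace UHypergraph

/-- The density `|E|/|V|` of a hypergraph. -/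
noncomputable def density {s : ℕ} (G : UHypergraph s) : ℚ :=
  (G.E.card : ℚ) / (G.V.card : ℚ)

/-- `G` is strictly balanced: every proper subhypergraph with at least one
vertex has strictly smaller density. -/
def StrictlyBalanced {s : ℕ} (G : UHypergraph s) : Prop :=
  G.V.Nonempty ∧ ∀ H : UHypergraph s, H.V ⊆ G.V → H.E ⊆ G.E → H.V.Nonempty →
    ¬(H.V = G.V ∧ H.E = G.E) → H.density < G.density

/-- The subhypergraph of `G` induced on the vertex set `S`. -/
def restrict {s : ℕ} (G : UHypergraph s) (S : Finset ℕ) : UHypergraph s where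
  V := G.V ∩ S
  E := G.E.filter (fun e => e ⊆ S)
  card_edges := fun e he => G.card_edges e (Finset.mem_filter.mp he).1
  edges_sub := fun e he a ha => Finset.mem_inter.mpr
    ⟨G.edges_sub e (Finset.mem_filter.mp he).1 ha, (Finset.mem_filter.mp he).2 ha⟩

/-- A cycle `(v 0, e 0, v 1, e 1, …, v (m-1), e (m-1), v m = v 0)` in `G`. -/
def IsCycle {s : ℕ} (G : UHypergraph s) (m : ℕ) (v : ℕ → ℕ) (e : ℕ → Finset ℕ) : Prop :=
  0 < m ∧ v m = v 0 ∧ e m = e 0 ∧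
  (∀ i < m, e i ∈ G.E) ∧ (∀ i < m, v i ∈ G.V) ∧
  (∀ i < m, v i ≠ v (i + 1)) ∧ (∀ i < m, e i ≠ e (i + 1)) ∧
  (∀ i < m, v i ∈ e i ∧ v (i + 1) ∈ e i)

/-- `G` is connected: it is nonempty and any two vertices are joined by a
chain of edges. -/
def Connected {s : ℕ} (G : UHypergraph s) : Prop :=
  G.V.Nonempty ∧ ∀ u ∈ G.V, ∀ w ∈ G.V,
    Relation.ReflTransGen (fun a b => ∃ e ∈ G.E, a ∈ e ∧ b ∈ e) u w

/-- A tree is a connected hypergraph without cycles. -/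
def IsTree {s : ℕ} (G : UHypergraph s) : Prop :=
  G.Connected ∧ ¬ ∃ m v e, G.IsCycle m v e

/-- For a rooted pair: number of nonroot vertices minus `α` times the number of
edges with at least one nonroot vertex, for roots `S` in the hypergraph `K`. -/
noncomputable def exVal {s : ℕ} (α : ℝ) (S : Finset ℕ) (K : UHypergraph s) : ℝ :=
  ((K.V \ S).card : ℝ) - ((K.E.filter (fun f => ¬ f ⊆ S)).card : ℝ) * α

/-- The rooted hypergraph `(S, K)` is dense: `v - e·α < 0`. -/
noncomputable def IsDense {s : ℕ} (α : ℝ) (S : Finset ℕ) (K : UHypergraph s) : Prop :=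
  exVal α S K < 0

/-- The rooted hypergraph `(S, K)` is sparse: `v - e·α > 0`. -/
noncomputable def IsSparse {s : ℕ} (α : ℝ) (S : Finset ℕ) (K : UHypergraph s) : Prop :=
  0 < exVal α S K

/-- `(R, K)` is rigid: every nailextension `(S, K)` with `R ⊆ S ⊊ V(K)` is dense. -/
noncomputable def Rigid {s : ℕ} (α : ℝ) (R : Finset ℕ) (K : UHypergraph s) : Prop :=
  ∀ S : Finset ℕ, R ⊆ S → S ⊂ K.V → IsDense α S K

/-- `(R, K)` is safe: every subextension `(R, K|_S)` with `R ⊊ S ⊆ V(K)` is sparse. -/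
noncomputable def Safe {s : ℕ} (α : ℝ) (R : Finset ℕ) (K : UHypergraph s) : Prop :=
  ∀ S : Finset ℕ, R ⊂ S → S ⊆ K.V → IsSparse α R (K.restrict S)

/-- `(R, K)` is minimally safe: safe, with no safe nailextension. -/
noncomputable def MinimallySafe {s : ℕ} (α : ℝ) (R : Finset ℕ) (K : UHypergraph s) : Prop :=
  Safe α R K ∧ ¬ ∃ S : Finset ℕ, R ⊂ S ∧ S ⊂ K.V ∧ Safe α S K

/-- A rigid `t`-chain `x 0 ⊆ x 1 ⊆ … ⊆ x k` in `G`: each step adds at most `t`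
vertices and each `(x i, G|_{x (i+1)})` is rigid. -/
noncomputable def IsRigidChain {s : ℕ} (α : ℝ) (G : UHypergraph s) (t k : ℕ)
    (x : ℕ → Finset ℕ) : Prop :=
  (∀ i < k, x i ⊆ x (i + 1)) ∧ (∀ i < k, (x (i + 1) \ x i).card ≤ t) ∧
  (∀ i ≤ k, x i ⊆ G.V) ∧ (∀ i < k, Rigid α (x i) (G.restrict (x (i + 1))))

/-- `C` is the `t`-closure of `X` in `G`: it is the endpoint of a rigid
`t`-chain starting at `X` and contains the endpoint of every such chain. -/
noncomputable def IsTClosure {s : ℕ} (α : ℝ) (G : UHypergraph s) (t : ℕ)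
    (X C : Finset ℕ) : Prop :=
  (∃ k x, IsRigidChain α G t k x ∧ x 0 = X ∧ x k = C) ∧
  ∀ k' x', IsRigidChain α G t k' x' → x' 0 = X → x' k' ⊆ C

end UHypergraph

open UHypergraph

/-- The possible edges of an `s`-uniform hypergraph on `Fin n`. -/
def edgeCandidates (s n : ℕ) : Finset (Finset (Fin n)) :=
  Finset.univ.filter (fun e => e.card = s)

/-- The probability of the event `A` under the binomial random `s`-uniform
hypergraph `G^s(n,p)`: each of the `C(n,s)` possible edges appears
independently with probability `p`. -/
noncomputable def hyperProb (s n : ℕ) (p : ℝ) (A : Set (Finset (Finset (Fin n)))) : ℝ :=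
  ∑ E ∈ (edgeCandidates s n).powerset,
    if E ∈ A then p ^ E.card * (1 - p) ^ ((edgeCandidates s n).card - E.card) else 0

/-- The `s`-uniform hypergraph on vertex set `{0,…,n-1}` determined by an
edge set over `Fin n`. -/
noncomputable def ofEdges (s n : ℕ) (E : Finset (Finset (Fin n))) : UHypergraph s where
  V := Finset.range n
  E := (E.filter (fun e => e.card = s)).image (fun e => e.image Fin.val)
  card_edges := by
    intro f hf
    simp only [Finset.mem_image, Finset.mem_filter] at hf
    obtain ⟨e, ⟨_, hcard⟩, rfl⟩ := hf
    rw [Finset.card_image_of_injective _ Fin.val_injective]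
    exact hcard
  edges_sub := by
    intro f hf a ha
    simp only [Finset.mem_image, Finset.mem_filter] at hf
    obtain ⟨e, _, rfl⟩ := hf
    simp only [Finset.mem_image] at ha
    obtain ⟨b, _, rfl⟩ := ha
    exact Finset.mem_range.mpr b.isLt

/-!
A first moment argument. Suppose the `t`-closure of an `r`-set `X` has more than `K + r` vertices
and cut its rigid chain at the first set `Y` with more than `K + r` vertices, so that
`|Y| ≤ K + r + t`. A rigid step adding `v ≤ t` vertices and `e` edges is dense, hence
`eα ≥ (1 + ε) v` by the choice of `ε`. Summing over the steps, the family `F` of edges inside `Y`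
but not inside `X` satisfies `α|F| ≥ (1 + ε)(|Y| - r) > |Y| - r + εK > |Y|`: it spans
`v ≤ K + r + t` vertices with `v < α|F|`. For each of the finitely many shapes `(v, |F|)` there are
`O(n^v)` such families, each present with probability `n^{-α|F|}`, so a.a.s. none is present.
-/

open Finset Filter Topology

section Weights

variable {ι : Type*}

def edgeSetWeight (N : Finset ι) (p : ℝ) (E : Finset ι) : ℝ :=
  p ^ #E * (1 - p) ^ (#N - #E)

lemma edgeSetWeight_nonneg (N : Finset ι) {p : ℝ} (hp0 : 0 ≤ p) (hp1 : p ≤ 1) (E : Finset ι) :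
    0 ≤ edgeSetWeight N p E :=
  mul_nonneg (pow_nonneg hp0 _) (pow_nonneg (sub_nonneg.2 hp1) _)

lemma sum_edgeSetWeight (N : Finset ι) (p : ℝ) :
    ∑ E ∈ N.powerset, edgeSetWeight N p E = 1 := by
  simp only [edgeSetWeight, sum_pow_mul_eq_add_pow, add_sub_cancel, one_pow]

lemma sum_edgeSetWeight_of_subset [DecidableEq ι] {N F : Finset ι} (hF : F ⊆ N) (p : ℝ) :
    ∑ E ∈ N.powerset with F ⊆ E, edgeSetWeight N p E = p ^ #F := by
  have hIcc : {E ∈ N.powerset | F ⊆ E} = Icc F N := by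
    ext E; simp [and_comm]
  have hinj : Set.InjOn (F ∪ ·) (N \ F).powerset := by
    intro D hD D' hD' h
    have hD : Disjoint F D := disjoint_of_subset_right (mem_powerset.1 hD) disjoint_sdiff
    have hD' : Disjoint F D' := disjoint_of_subset_right (mem_powerset.1 hD') disjoint_sdiff
    rw [← union_sdiff_cancel_left hD, ← union_sdiff_cancel_left hD']
    exact congrArg (· \ F) h
  rw [hIcc, Icc_eq_image_powerset hF, sum_image hinj]
  calc ∑ D ∈ (N \ F).powerset, edgeSetWeight N p (F ∪ D)
      = ∑ D ∈ (N \ F).powerset, p ^ #F * edgeSetWeight (N \ F) p D := by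
        refine sum_congr rfl fun D hD => ?_
        have hdisj : Disjoint F D := disjoint_of_subset_right (mem_powerset.1 hD) disjoint_sdiff
        have hD := card_le_card (mem_powerset.1 hD)
        have hNF := card_sdiff_add_card_eq_card hF
        rw [edgeSetWeight, edgeSetWeight, card_union_of_disjoint hdisj, pow_add,
          show #N - (#F + #D) = #(N \ F) - #D by omega]
        ring
    _ = p ^ #F := by rw [← mul_sum, sum_edgeSetWeight, mul_one]

end Weights

lemma hyperProb_eq_sum (s n : ℕ) (p : ℝ) (A : Set (Finset (Finset (Fin n)))) :
    hyperProb s n p A = ∑ E ∈ (edgeCandidates s n).powerset,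
      if E ∈ A then edgeSetWeight (edgeCandidates s n) p E else 0 :=
  rfl

lemma hyperProb_nonneg {s n : ℕ} {p : ℝ} (hp0 : 0 ≤ p) (hp1 : p ≤ 1)
    (A : Set (Finset (Finset (Fin n)))) : 0 ≤ hyperProb s n p A := by
  rw [hyperProb_eq_sum]
  exact sum_nonneg fun E _ => by split_ifs <;> simp [edgeSetWeight_nonneg, hp0, hp1]

lemma hyperProb_add_hyperProb_compl (s n : ℕ) (p : ℝ) (A : Set (Finset (Finset (Fin n)))) :
    hyperProb s n p A + hyperProb s n p Aᶜ = 1 := by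
  rw [hyperProb_eq_sum, hyperProb_eq_sum, ← sum_add_distrib, ← sum_edgeSetWeight _ p]
  refine sum_congr rfl fun E _ => ?_
  by_cases h : E ∈ A <;> simp [h]

lemma hyperProb_le_sum_of_forall_exists_subset {s n : ℕ} {p : ℝ} (hp0 : 0 ≤ p) (hp1 : p ≤ 1)
    {A : Set (Finset (Finset (Fin n)))} {𝓕 : Finset (Finset (Finset (Fin n)))}
    (h𝓕 : 𝓕 ⊆ (edgeCandidates s n).powerset)
    (hA : ∀ E ⊆ edgeCandidates s n, E ∈ A → ∃ F ∈ 𝓕, F ⊆ E) :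
    hyperProb s n p A ≤ ∑ F ∈ 𝓕, p ^ #F := by
  set N := edgeCandidates s n
  rw [hyperProb_eq_sum]
  calc _ ≤ ∑ E ∈ N.powerset, ∑ F ∈ 𝓕, if F ⊆ E then edgeSetWeight N p E else 0 := by
        refine sum_le_sum fun E hE => ?_
        have hw := edgeSetWeight_nonneg N hp0 hp1 E
        split_ifs with hEA
        · obtain ⟨F, hF, hFE⟩ := hA E (mem_powerset.1 hE) hEA
          refine le_trans ?_ (single_le_sum (fun F _ => ?_) hF)
          · exact (if_pos hFE).ge
          · split_ifs <;> simp [hw]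
        · exact sum_nonneg fun F _ => by split_ifs <;> simp [hw]
    _ = ∑ F ∈ 𝓕, p ^ #F := by
        rw [sum_comm]
        refine sum_congr rfl fun F hF => ?_
        rw [← sum_filter, sum_edgeSetWeight_of_subset (mem_powerset.1 (h𝓕 hF))]

section Counting

variable {α : Type*} [DecidableEq α] [Fintype α]

lemma card_le_choose_mul_of_card_biUnion_eq {v : ℕ} {𝓕 : Finset (Finset (Finset α))}
    (h𝓕 : ∀ F ∈ 𝓕, #(F.biUnion id) = v) : #𝓕 ≤ (Fintype.card α).choose v * 2 ^ 2 ^ v := by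
  have hsub : 𝓕 ⊆ (univ.powersetCard v).biUnion fun U => U.powerset.powerset := by
    intro F hF
    simp only [mem_biUnion, mem_powersetCard, mem_powerset]
    exact ⟨F.biUnion id, ⟨subset_univ _, h𝓕 F hF⟩,
      fun e he => mem_powerset.2 (subset_biUnion_of_mem id he)⟩
  calc #𝓕 ≤ ∑ U ∈ univ.powersetCard v, #U.powerset.powerset :=
        (card_le_card hsub).trans card_biUnion_le
    _ = (Fintype.card α).choose v * 2 ^ 2 ^ v := by
        rw [sum_congr rfl fun U hU => by rw [card_powerset, card_powerset,
          (mem_powersetCard.1 hU).2], sum_const, card_powersetCard, card_univ, smul_eq_mul]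

/-- Candidate pairs (vertices, edges) of a dense family on at most `M` vertices, which has at most
`2 ^ M` edges. -/
noncomputable def denseShapes (β : ℝ) (M : ℕ) : Finset (ℕ × ℕ) :=
  {q ∈ range (M + 1) ×ˢ range (2 ^ M + 1) | (q.1 : ℝ) < β * q.2}

lemma sum_pow_card_le_sum_denseShapes {M : ℕ} {β p : ℝ} (hp : 0 ≤ p)
    {𝓕 : Finset (Finset (Finset α))}
    (h𝓕 : ∀ F ∈ 𝓕, #(F.biUnion id) ≤ M ∧ (#(F.biUnion id) : ℝ) < β * #F) :
    ∑ F ∈ 𝓕, p ^ #F ≤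
      ∑ q ∈ denseShapes β M, (2 ^ 2 ^ M : ℝ) * ((Fintype.card α).choose q.1 * p ^ q.2) := by
  have hshape : ∀ F ∈ 𝓕, (#(F.biUnion id), #F) ∈ denseShapes β M := by
    intro F hF
    have hF2 : #F ≤ 2 ^ #(F.biUnion id) := by
      rw [← card_powerset]
      exact card_le_card fun e he => mem_powerset.2 (subset_biUnion_of_mem id he)
    have hM := (h𝓕 F hF).1
    have := Nat.pow_le_pow_right two_pos hM
    simp only [denseShapes, mem_filter, mem_product, mem_range]
    exact ⟨⟨by omega, by omega⟩, (h𝓕 F hF).2⟩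
  rw [← sum_fiberwise_of_maps_to hshape]
  refine sum_le_sum fun q hq => ?_
  have hv : q.1 ≤ M := by
    simp only [denseShapes, mem_filter, mem_product, mem_range] at hq
    omega
  have hpow : ∀ F ∈ {F ∈ 𝓕 | (#(F.biUnion id), #F) = q}, p ^ #F = p ^ q.2 :=
    fun F hF => by rw [← (mem_filter.1 hF).2]
  rw [sum_congr rfl hpow, sum_const, nsmul_eq_mul, ← mul_assoc]
  refine mul_le_mul_of_nonneg_right ?_ (pow_nonneg hp _)
  have hcard := card_le_choose_mul_of_card_biUnion_eq (𝓕 := {F ∈ 𝓕 | (#(F.biUnion id), #F) = q})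
    fun F hF => congrArg Prod.fst (mem_filter.1 hF).2
  calc (#{F ∈ 𝓕 | (#(F.biUnion id), #F) = q} : ℝ)
      ≤ (Fintype.card α).choose q.1 * 2 ^ 2 ^ q.1 := by exact_mod_cast hcard
    _ ≤ (Fintype.card α).choose q.1 * 2 ^ 2 ^ M := by gcongr <;> norm_num
    _ = 2 ^ 2 ^ M * (Fintype.card α).choose q.1 := mul_comm _ _

end Counting

lemma tendsto_choose_mul_rpow_neg_pow {v f : ℕ} {α : ℝ} (h : (v : ℝ) < α * f) :
    Tendsto (fun n : ℕ => (n.choose v : ℝ) * ((n : ℝ) ^ (-α)) ^ f) atTop (𝓝 0) := by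
  have hlim : Tendsto (fun n : ℕ => (n : ℝ) ^ (-(α * f - v))) atTop (𝓝 0) :=
    (tendsto_rpow_neg_atTop (by linarith)).comp tendsto_natCast_atTop_atTop
  refine squeeze_zero' (Eventually.of_forall fun n => by positivity) ?_ hlim
  filter_upwards [eventually_gt_atTop 0] with n hn
  have hn : (0 : ℝ) < n := by exact_mod_cast hn
  calc (n.choose v : ℝ) * ((n : ℝ) ^ (-α)) ^ f ≤ (n : ℝ) ^ (v : ℝ) * ((n : ℝ) ^ (-α)) ^ f := by
        gcongr
        rw [Real.rpow_natCast]
        exact_mod_cast Nat.choose_le_pow n v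
    _ = (n : ℝ) ^ (-(α * f - v)) := by
        rw [← Real.rpow_natCast _ f, ← Real.rpow_mul hn.le, ← Real.rpow_add hn]
        ring_nf

theorem tendsto_hyperProb_of_exists_dense_subset {s M : ℕ} {α : ℝ} (hα : 0 ≤ α)
    {A : ∀ n, Set (Finset (Finset (Fin n)))}
    (hA : ∀ n, ∀ E ⊆ edgeCandidates s n, E ∉ A n →
      ∃ F ⊆ E, #(F.biUnion id) ≤ M ∧ (#(F.biUnion id) : ℝ) < α * #F) :
    Tendsto (fun n => hyperProb s n ((n : ℝ) ^ (-α)) (A n)) atTop (𝓝 1) := by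
  set g : ℕ → ℝ := fun n => ∑ q ∈ denseShapes α M,
    (2 ^ 2 ^ M : ℝ) * (n.choose q.1 * ((n : ℝ) ^ (-α)) ^ q.2)
  have hg : Tendsto g atTop (𝓝 0) := by
    simpa using tendsto_finsetSum (denseShapes α M) fun q hq =>
      (tendsto_choose_mul_rpow_neg_pow (mem_filter.1 hq).2).const_mul (2 ^ 2 ^ M : ℝ)
  have hbounds : ∀ᶠ n in atTop, 1 - g n ≤ hyperProb s n ((n : ℝ) ^ (-α)) (A n) ∧
      hyperProb s n ((n : ℝ) ^ (-α)) (A n) ≤ 1 := by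
    filter_upwards [eventually_ge_atTop 1] with n hn
    set p := (n : ℝ) ^ (-α)
    have hp0 : 0 ≤ p := by positivity
    have hp1 : p ≤ 1 :=
      Real.rpow_le_one_of_one_le_of_nonpos (by exact_mod_cast hn) (neg_nonpos.2 hα)
    set 𝓕 := {F ∈ (edgeCandidates s n).powerset |
      #(F.biUnion id) ≤ M ∧ (#(F.biUnion id) : ℝ) < α * #F}
    have hbad : hyperProb s n p (A n)ᶜ ≤ ∑ F ∈ 𝓕, p ^ #F := by
      refine hyperProb_le_sum_of_forall_exists_subset hp0 hp1 (filter_subset _ _) fun E hE hEA => ?_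
      obtain ⟨F, hFE, hF⟩ := hA n E hE hEA
      exact ⟨F, mem_filter.2 ⟨mem_powerset.2 (hFE.trans hE), hF⟩, hFE⟩
    have hcount := sum_pow_card_le_sum_denseShapes hp0 (𝓕 := 𝓕) fun F hF => (mem_filter.1 hF).2
    rw [Fintype.card_fin] at hcount
    have hsum := hyperProb_add_hyperProb_compl s n p (A n)
    have hcompl := hyperProb_nonneg (s := s) hp0 hp1 (A n)ᶜ
    constructor <;> linarith
  exact tendsto_of_tendsto_of_tendsto_of_le_of_le' (by simpa using hg.const_sub 1)
    tendsto_const_nhds (hbounds.mono fun _ h => h.1) (hbounds.mono fun _ h => h.2)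

lemma exists_le_mem_Ioc_of_succ_le_add {a : ℕ → ℕ} {B t k : ℕ} (h0 : a 0 ≤ B)
    (hstep : ∀ i < k, a (i + 1) ≤ a i + t) (hk : B < a k) : ∃ j ≤ k, B < a j ∧ a j ≤ B + t := by
  induction k with
  | zero => omega
  | succ k ih =>
    by_cases hak : B < a k
    · obtain ⟨j, hj, hB⟩ := ih (fun i hi => hstep i (by omega)) hak
      exact ⟨j, by omega, hB⟩
    · exact ⟨k + 1, le_rfl, hk, by linarith [hstep k (by omega)]⟩

def excessRatios (α : ℝ) (t : ℕ) : Set ℝ :=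
  {x : ℝ | ∃ v e : ℕ, 1 ≤ v ∧ v ≤ t ∧ 0 < (e : ℝ) * α - v ∧ x = ((e : ℝ) * α - v) / v}

lemma pos_of_mem_excessRatios {α x : ℝ} {t : ℕ} (hx : x ∈ excessRatios α t) : 0 < x := by
  obtain ⟨v, e, hv, -, hpos, rfl⟩ := hx
  have : (0 : ℝ) < v := by exact_mod_cast hv
  positivity

lemma one_add_mul_le_of_mem_lowerBounds {α ε : ℝ} {t : ℕ} (hε : ε ∈ lowerBounds (excessRatios α t))
    {v e : ℕ} (hv : 1 ≤ v) (hvt : v ≤ t) (hve : (v : ℝ) < e * α) : (1 + ε) * v ≤ e * α := by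
  have hv0 : (0 : ℝ) < v := by exact_mod_cast hv
  have := hε ⟨v, e, hv, hvt, by linarith, rfl⟩
  rw [le_div_iff₀ hv0] at this
  linarith

namespace UHypergraph

variable {s : ℕ} (G : UHypergraph s)

lemma restrict_V_of_subset {S : Finset ℕ} (hS : S ⊆ G.V) : (G.restrict S).V = S :=
  inter_eq_right.2 hS

@[simp]
lemma mem_restrict_E {S f : Finset ℕ} : f ∈ (G.restrict S).E ↔ f ∈ G.E ∧ f ⊆ S :=
  mem_filter

lemma restrict_E_mono {R S : Finset ℕ} (hRS : R ⊆ S) : (G.restrict R).E ⊆ (G.restrict S).E :=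
  fun _ hf => (G.mem_restrict_E.2 ⟨(G.mem_restrict_E.1 hf).1, (G.mem_restrict_E.1 hf).2.trans hRS⟩)

lemma exVal_restrict {α : ℝ} {R S : Finset ℕ} (hS : S ⊆ G.V) :
    exVal α R (G.restrict S) = #(S \ R) - #((G.restrict S).E \ (G.restrict R).E) * α := by
  have hE : {f ∈ (G.restrict S).E | ¬f ⊆ R} = (G.restrict S).E \ (G.restrict R).E := by
    ext f
    simp only [mem_filter, Finset.mem_sdiff, mem_restrict_E]
    tauto
  rw [exVal, restrict_V_of_subset G hS, hE]

lemma one_add_mul_le_of_rigid {α ε : ℝ} {t : ℕ} (hε : ε ∈ lowerBounds (excessRatios α t))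
    {R S : Finset ℕ} (hRS : R ⊆ S) (hS : S ⊆ G.V) (hSR : #(S \ R) ≤ t)
    (hrigid : Rigid α R (G.restrict S)) :
    (1 + ε) * #(S \ R) ≤ #((G.restrict S).E \ (G.restrict R).E) * α := by
  obtain rfl | hne := eq_or_ne R S
  · simp
  have hdense :=
    hrigid R subset_rfl (by rw [restrict_V_of_subset G hS]; exact hRS.ssubset_of_ne hne)
  rw [IsDense, exVal_restrict G hS] at hdense
  refine one_add_mul_le_of_mem_lowerBounds hε ?_ hSR (by linarith)
  exact card_pos.2 (sdiff_nonempty.2 fun h => hne (hRS.antisymm h))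

variable {G} {α : ℝ} {t k : ℕ} {x : ℕ → Finset ℕ}

lemma IsRigidChain.subset (hx : IsRigidChain α G t k x) {i : ℕ} (hi : i ≤ k) : x 0 ⊆ x i := by
  induction i with
  | zero => exact subset_rfl
  | succ i ih => exact (ih (by omega)).trans (hx.1 i (by omega))

lemma IsRigidChain.card_succ_le (hx : IsRigidChain α G t k x) {i : ℕ} (hi : i < k) :
    #(x (i + 1)) ≤ #(x i) + t := by
  have := card_sdiff_add_card_eq_card (hx.1 i hi)
  have := hx.2.1 i hi
  omega

lemma IsRigidChain.one_add_mul_le {ε : ℝ} (hε : ε ∈ lowerBounds (excessRatios α t))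
    (hx : IsRigidChain α G t k x) {i : ℕ} (hi : i ≤ k) :
    (1 + ε) * (#(x i) - #(x 0) : ℝ) ≤ (#(G.restrict (x i)).E - #(G.restrict (x 0)).E : ℝ) * α := by
  induction i with
  | zero => simp
  | succ i ih =>
    have hsub := hx.1 i (by omega)
    have hstep := one_add_mul_le_of_rigid G hε hsub (hx.2.2.1 (i + 1) hi) (hx.2.1 i (by omega))
      (hx.2.2.2 i (by omega))
    have hV : (#(x (i + 1) \ x i) : ℝ) = #(x (i + 1)) - #(x i) := by
      rw [eq_sub_iff_add_eq]; exact_mod_cast card_sdiff_add_card_eq_card hsub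
    have hE : (#((G.restrict (x (i + 1))).E \ (G.restrict (x i)).E) : ℝ) =
        #(G.restrict (x (i + 1))).E - #(G.restrict (x i)).E := by
      rw [eq_sub_iff_add_eq]
      exact_mod_cast card_sdiff_add_card_eq_card (restrict_E_mono G hsub)
    rw [hV, hE] at hstep
    linarith [ih (by omega)]

theorem IsRigidChain.exists_dense_subset {ε : ℝ} {r K : ℕ} (hε : IsLeast (excessRatios α t) ε)
    (hK : (r : ℝ) - K * ε < 0) (hx : IsRigidChain α G t k x) (hx0 : #(x 0) = r)
    (hk : K + r < #(x k)) :
    ∃ F ⊆ G.E, #(F.biUnion id) ≤ K + r + t ∧ (#(F.biUnion id) : ℝ) < α * #F := by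
  obtain ⟨j, hj, hKj, hjt⟩ := exists_le_mem_Ioc_of_succ_le_add (a := fun i => #(x i))
    (by omega) (fun i hi => hx.card_succ_le hi) hk
  set F := (G.restrict (x j)).E \ (G.restrict (x 0)).E
  have hFV : F.biUnion id ⊆ x j :=
    biUnion_subset.2 fun _ hf => (G.mem_restrict_E.1 (mem_sdiff.1 hf).1).2
  have hFcard : (#F : ℝ) = #(G.restrict (x j)).E - #(G.restrict (x 0)).E := by
    rw [eq_sub_iff_add_eq]
    exact_mod_cast card_sdiff_add_card_eq_card (restrict_E_mono G (hx.subset hj))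
  refine ⟨F, sdiff_subset.trans (filter_subset _ _), (card_le_card hFV).trans hjt, ?_⟩
  have hinv := hx.one_add_mul_le hε.2 hj
  have hε0 := pos_of_mem_excessRatios hε.1
  have hV : (#(F.biUnion id) : ℝ) ≤ #(x j) := by exact_mod_cast card_le_card hFV
  have hKj : (K : ℝ) + r < #(x j) := by exact_mod_cast hKj
  have hεK : ε * K ≤ ε * (#(x j) - r) := by gcongr; linarith
  rw [hx0] at hinv
  rw [hFcard, mul_comm]
  linarith

end UHypergraph

lemma exists_subset_of_subset_ofEdges_E {s n : ℕ} {E : Finset (Finset (Fin n))}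
    {F : Finset (Finset ℕ)} (hF : F ⊆ (ofEdges s n E).E) :
    ∃ F' ⊆ E, #(F'.biUnion id) = #(F.biUnion id) ∧ #F' = #F := by
  have himg : Function.Injective fun e : Finset (Fin n) => e.image Fin.val :=
    image_injective Fin.val_injective
  set F' := {e ∈ E | e.image Fin.val ∈ F}
  have hF' : F'.image (fun e => e.image Fin.val) = F := by
    refine (image_subset_iff.2 fun e he => (mem_filter.1 he).2).antisymm fun f hf => ?_
    obtain ⟨e, he, rfl⟩ := mem_image.1 (hF hf)
    exact mem_image_of_mem _ (mem_filter.2 ⟨(mem_filter.1 he).1, hf⟩)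
  refine ⟨F', filter_subset _ _, ?_, by rw [← hF', card_image_of_injective _ himg]⟩
  rw [← hF', image_biUnion, ← card_image_of_injective _ Fin.val_injective, biUnion_image]
  rfl

theorem stmt15_general (s t r : ℕ)
    (α : ℝ) (hα : 0 < α)
    (ε : ℝ)
    (hε : IsLeast {x : ℝ | ∃ v e : ℕ, 1 ≤ v ∧ v ≤ t ∧ 0 < (e : ℝ) * α - v ∧
      x = ((e : ℝ) * α - v) / v} ε)
    (K : ℕ) (hK : (r : ℝ) - (K : ℝ) * ε < 0) :
    Filter.Tendsto
      (fun n => hyperProb s n ((n : ℝ) ^ (-α))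
        {E | ∀ X ⊆ Finset.range n, X.card = r →
          ∀ C : Finset ℕ, IsTClosure α (ofEdges s n E) t X C → C.card ≤ K + r})
      Filter.atTop (nhds 1) := by
  refine tendsto_hyperProb_of_exists_dense_subset (M := K + r + t) hα.le fun n E _ hE => ?_
  simp only [Set.mem_ofPred_eq, not_forall, not_le] at hE
  obtain ⟨X, -, hX, C, ⟨⟨k, x, hx, hx0, rfl⟩, -⟩, hk⟩ := hE
  obtain ⟨F, hFE, hFV, hF⟩ := hx.exists_dense_subset hε hK (hx0 ▸ hX) hk
  obtain ⟨F', hF'E, hV, hcard⟩ := exists_subset_of_subset_ofEdges_E hFE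
  exact ⟨F', hF'E, hV ▸ hFV, hV ▸ hcard ▸ hF⟩

/-- Finite Closure Theorem: with `ε` the minimum of
`(eα - v)/v` over `1 ≤ v ≤ t`, `eα - v > 0`, and `K` with `r - Kε < 0`, a.a.s.
every `r`-set `X` in `G^s(n, n^{-α})` has `|cl_t(X)| ≤ K + r`. -/
theorem stmt15 (s t r : ℕ) (hs : 2 ≤ s) (ht : 0 < t) (hr : 0 < r)
    (α : ℝ) (hα : 0 < α) (hirr : Irrational α)
    (ε : ℝ)
    (hε : IsLeast {x : ℝ | ∃ v e : ℕ, 1 ≤ v ∧ v ≤ t ∧ 0 < (e : ℝ) * α - v ∧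
      x = ((e : ℝ) * α - v) / v} ε)
    (K : ℕ) (hK : (r : ℝ) - (K : ℝ) * ε < 0) :
    Filter.Tendsto
      (fun n => hyperProb s n ((n : ℝ) ^ (-α))
        {E | ∀ X ⊆ Finset.range n, X.card = r →
          ∀ C : Finset ℕ, IsTClosure α (ofEdges s n E) t X C → C.card ≤ K + r})
      Filter.atTop (nhds 1) :=
  stmt15_general s t r α hα ε hε K hK
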